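/- arXiv:1901.09876 — 3 statements merged into one kernel-verified Lean document; each statement's English description precedes it below -/
import Mathlib

section
/- There exists a universal constant C > 0 such that the following holds. Let E = {x₁, …, x_N} ⊂ ℝ be a finite set with x₁ < … < x_N and N ≥ 3, let f : E → [0, ∞), and let M > 0. Suppose that for every j = 1, …, N − 2 there exists a twice continuously differentiable function F_j : ℝ → ℝ with F_j ≥ 0 on ℝ, F_j(x_i) = f(x_i) for i ∈ {j, j+1, j+2}, and ‖F_j‖_{C²(ℝ)} ≤ M. Then there exists a twice continuously differentiable F : ℝ → ℝ with F ≥ 0 on ℝ, F(x) = f(x) for all x ∈ E, and ‖F‖_{C²(ℝ)} ≤ C·M. -/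
/-!
The interpolant is built from left to right by gluing the local interpolants `F_j`. Suppose `G`
interpolates `f` at `x₀, …, x_{j+2}` and still coincides with `F_j` on `[x_{j+1}, ∞)`. On
`[a, b] = [x_{j+1}, x_{j+2}]` replace `G` by `ψ G + (1 - ψ) F_{j+1}`, where `ψ` falls from `1` to
`0` across the middle half of `[a, b]`, so that `|ψ^{(i)}| ≲ (b - a)^{-i}`; being a convex
combination, the result is nonnegative. The difference `H = F_j - F_{j+1}` vanishes at `a` and `b`
and `|H''| ≤ 2M`, so Rolle's theorem and the mean value theorem give `|H^{(k)}| ≲ M (b - a)^i`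
whenever `i + k ≤ 2`. These powers of `b - a` cancel those of `ψ` in the Leibniz rule, so the glued
function is bounded by `C M` in `C²` on `[a, b]`; outside `[a, b]` it is the old `G` or `F_{j+1}`,
so the bound does not grow along the induction.
-/

noncomputable section

/-- `C2NormLE F M` means that the `C²(ℝ)` norm
`‖F‖_{C²(ℝ)} := sup_{x ∈ ℝ} (|F(x)|² + |F′(x)|² + |F″(x)|²)^{1/2}` is at most `M`. -/
def C2NormLE (F : ℝ → ℝ) (M : ℝ) : Prop :=
  ∀ x : ℝ, Real.sqrt ((F x) ^ 2 + (deriv F x) ^ 2 + (deriv (deriv F) x) ^ 2) ≤ M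

open Real Set Filter Topology
open scoped ContDiff

def C2BoundOn (F : ℝ → ℝ) (s : Set ℝ) (M : ℝ) : Prop :=
  ∀ t ∈ s, |F t| ≤ M ∧ |deriv F t| ≤ M ∧ |deriv (deriv F) t| ≤ M

namespace C2BoundOn

variable {F G : ℝ → ℝ} {s u : Set ℝ} {M K : ℝ}

theorem mono (h : C2BoundOn F s M) (hus : u ⊆ s) : C2BoundOn F u M :=
  fun t ht => h t (hus ht)

theorem mono_right (h : C2BoundOn F s M) (hMK : M ≤ K) : C2BoundOn F s K :=
  fun t ht => (h t ht).imp hMK.trans' (And.imp hMK.trans' hMK.trans')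

theorem union (hs : C2BoundOn F s M) (hu : C2BoundOn F u M) : C2BoundOn F (s ∪ u) M := by
  rintro t (ht | ht)
  exacts [hs t ht, hu t ht]

theorem congr (h : C2BoundOn F s M) (hs : IsOpen s) (hFG : EqOn F G s) : C2BoundOn G s M := by
  intro t ht
  have h₀ : F =ᶠ[𝓝 t] G := eventually_of_mem (hs.mem_nhds ht) hFG
  have h₁ : deriv F =ᶠ[𝓝 t] deriv G := h₀.deriv
  rw [← h₀.eq_of_nhds, ← h₀.deriv_eq, ← h₁.deriv_eq]
  exact h t ht

theorem nonneg (h : C2BoundOn F s M) {t : ℝ} (ht : t ∈ s) : 0 ≤ M :=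
  (abs_nonneg _).trans (h t ht).1

theorem sub {F₁ F₂ : ℝ → ℝ} (h₁ : ContDiff ℝ 2 F₁) (h₂ : ContDiff ℝ 2 F₂)
    (hM : C2BoundOn F₁ s M) (hK : C2BoundOn F₂ s K) :
    C2BoundOn (F₁ - F₂) s (M + K) := by
  intro t ht
  have hd : deriv (F₁ - F₂) = deriv F₁ - deriv F₂ :=
    funext fun s => deriv_sub (h₁.differentiable two_ne_zero s) (h₂.differentiable two_ne_zero s)
  have hdd : deriv (deriv (F₁ - F₂)) t = deriv (deriv F₁) t - deriv (deriv F₂) t := by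
    rw [hd]
    exact deriv_sub (h₁.differentiable_deriv_two t) (h₂.differentiable_deriv_two t)
  obtain ⟨hM₀, hM₁, hM₂⟩ := hM t ht
  obtain ⟨hK₀, hK₁, hK₂⟩ := hK t ht
  rw [hdd, hd]
  exact ⟨(abs_sub _ _).trans (add_le_add hM₀ hK₀), (abs_sub _ _).trans (add_le_add hM₁ hK₁),
    (abs_sub _ _).trans (add_le_add hM₂ hK₂)⟩

theorem c2NormLE (h : C2BoundOn F univ M) : C2NormLE F (3 * M) := by
  intro t
  obtain ⟨h₀, h₁, h₂⟩ := h t trivial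
  have hM : 0 ≤ M := (abs_nonneg _).trans h₀
  rw [Real.sqrt_le_iff]
  refine ⟨by positivity, ?_⟩
  have := sq_le_sq' (abs_le.mp h₀).1 (abs_le.mp h₀).2
  have := sq_le_sq' (abs_le.mp h₁).1 (abs_le.mp h₁).2
  have := sq_le_sq' (abs_le.mp h₂).1 (abs_le.mp h₂).2
  nlinarith

end C2BoundOn

theorem C2NormLE.c2BoundOn {F : ℝ → ℝ} {M : ℝ} (h : C2NormLE F M) : C2BoundOn F univ M := by
  intro t _
  refine ⟨?_, ?_, ?_⟩ <;> refine (Real.abs_le_sqrt ?_).trans (h t) <;>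
    nlinarith [sq_nonneg (F t), sq_nonneg (deriv F t), sq_nonneg (deriv (deriv F) t)]

theorem deriv_smoothTransition_eq_zero {s : ℝ} (hs : s ∉ Icc 0 1) :
    deriv smoothTransition s = 0 := by
  simp only [mem_Icc, not_and_or, not_le] at hs
  rcases hs with hs | hs
  · have : smoothTransition =ᶠ[𝓝 s] fun _ => 0 :=
      eventually_of_mem (Iio_mem_nhds hs) fun t ht => smoothTransition.zero_of_nonpos (le_of_lt ht)
    rw [this.deriv_eq, deriv_const]
  · have : smoothTransition =ᶠ[𝓝 s] fun _ => 1 :=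
      eventually_of_mem (Ioi_mem_nhds hs) fun t ht => smoothTransition.one_of_one_le (le_of_lt ht)
    rw [this.deriv_eq, deriv_const]

theorem deriv_deriv_smoothTransition_eq_zero {s : ℝ} (hs : s ∉ Icc 0 1) :
    deriv (deriv smoothTransition) s = 0 := by
  have : deriv smoothTransition =ᶠ[𝓝 s] fun _ => 0 :=
    eventually_of_mem (isClosed_Icc.isOpen_compl.mem_nhds hs)
      fun t ht => deriv_smoothTransition_eq_zero ht
  rw [this.deriv_eq, deriv_const]

theorem contDiff_deriv_smoothTransition : ContDiff ℝ ∞ (deriv smoothTransition) :=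
  (contDiff_infty_iff_deriv.mp smoothTransition.contDiff).2

theorem exists_abs_deriv_smoothTransition_le :
    ∃ c, ∀ s, |deriv smoothTransition s| ≤ c ∧ |deriv (deriv smoothTransition) s| ≤ c := by
  have hsupp {g : ℝ → ℝ} (hg : ∀ s ∉ Icc (0 : ℝ) 1, g s = 0) : HasCompactSupport g :=
    HasCompactSupport.intro isCompact_Icc hg
  obtain ⟨c₁, hc₁⟩ := contDiff_deriv_smoothTransition.continuous.bounded_above_of_compact_support
    (hsupp fun _ => deriv_smoothTransition_eq_zero)
  obtain ⟨c₂, hc₂⟩ := (contDiff_infty_iff_deriv.mp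
    contDiff_deriv_smoothTransition).2.continuous.bounded_above_of_compact_support
    (hsupp fun _ => deriv_deriv_smoothTransition_eq_zero)
  exact ⟨max c₁ c₂, fun s => ⟨(hc₁ s).trans (le_max_left _ _), (hc₂ s).trans (le_max_right _ _)⟩⟩

def smoothTransitionDerivBound : ℝ :=
  exists_abs_deriv_smoothTransition_le.choose

theorem abs_deriv_smoothTransition_le (s : ℝ) :
    |deriv smoothTransition s| ≤ smoothTransitionDerivBound :=
  (exists_abs_deriv_smoothTransition_le.choose_spec s).1

theorem abs_deriv_deriv_smoothTransition_le (s : ℝ) :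
    |deriv (deriv smoothTransition) s| ≤ smoothTransitionDerivBound :=
  (exists_abs_deriv_smoothTransition_le.choose_spec s).2

theorem smoothTransitionDerivBound_nonneg : 0 ≤ smoothTransitionDerivBound :=
  (abs_nonneg _).trans (abs_deriv_smoothTransition_le 0)

def cutoff (m₁ m₂ t : ℝ) : ℝ := smoothTransition ((m₂ - t) / (m₂ - m₁))

section cutoff

variable {m₁ m₂ t : ℝ}

theorem contDiff_cutoff {n : ℕ∞} : ContDiff ℝ n (cutoff m₁ m₂) :=
  smoothTransition.contDiff.comp ((contDiff_const.sub contDiff_id).div_const _)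

theorem cutoff_nonneg : 0 ≤ cutoff m₁ m₂ t := smoothTransition.nonneg _

theorem cutoff_le_one : cutoff m₁ m₂ t ≤ 1 := smoothTransition.le_one _

theorem cutoff_eq_one (h : m₁ < m₂) (ht : t ≤ m₁) : cutoff m₁ m₂ t = 1 :=
  smoothTransition.one_of_one_le <| (one_le_div (sub_pos.mpr h)).mpr (by linarith)

theorem cutoff_eq_zero (h : m₁ < m₂) (ht : m₂ ≤ t) : cutoff m₁ m₂ t = 0 :=
  smoothTransition.zero_of_nonpos <| div_nonpos_of_nonpos_of_nonneg (by linarith) (by linarith)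

theorem hasDerivAt_comp_sub_div {g : ℝ → ℝ} {g' m d : ℝ}
    (hg : HasDerivAt g g' ((m - t) / d)) : HasDerivAt (fun s => g ((m - s) / d)) (-g' / d) t := by
  rw [show -g' / d = g' * (-1 / d) by ring]
  exact hg.comp t (((hasDerivAt_id t).const_sub m).div_const d)

theorem deriv_cutoff :
    deriv (cutoff m₁ m₂) = fun t => -deriv smoothTransition ((m₂ - t) / (m₂ - m₁)) / (m₂ - m₁) :=
  funext fun _ => (hasDerivAt_comp_sub_div
    ((smoothTransition.contDiff (n := 1)).differentiable one_ne_zero _).hasDerivAt).deriv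

theorem deriv_deriv_cutoff : deriv (deriv (cutoff m₁ m₂)) t =
    deriv (deriv smoothTransition) ((m₂ - t) / (m₂ - m₁)) / (m₂ - m₁) ^ 2 := by
  have : HasDerivAt (fun t => -deriv smoothTransition ((m₂ - t) / (m₂ - m₁)) / (m₂ - m₁))
      (-(-deriv (deriv smoothTransition) ((m₂ - t) / (m₂ - m₁)) / (m₂ - m₁)) / (m₂ - m₁)) t :=
    (hasDerivAt_comp_sub_div (contDiff_deriv_smoothTransition.differentiable (by simp)
      _).hasDerivAt).neg.div_const _
  rw [deriv_cutoff, this.deriv]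
  simp only [neg_div, neg_neg, div_div, sq]

theorem abs_deriv_cutoff_le (h : m₁ < m₂) :
    |deriv (cutoff m₁ m₂) t| ≤ smoothTransitionDerivBound / (m₂ - m₁) := by
  rw [deriv_cutoff, abs_div, abs_neg, abs_of_pos (sub_pos.mpr h)]
  exact div_le_div_of_nonneg_right (abs_deriv_smoothTransition_le _) (sub_pos.mpr h).le

theorem abs_deriv_deriv_cutoff_le (h : m₁ < m₂) :
    |deriv (deriv (cutoff m₁ m₂)) t| ≤ smoothTransitionDerivBound / (m₂ - m₁) ^ 2 := by
  rw [deriv_deriv_cutoff, abs_div, abs_of_pos (pow_pos (sub_pos.mpr h) 2)]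
  exact div_le_div_of_nonneg_right (abs_deriv_deriv_smoothTransition_le _)
    (pow_pos (sub_pos.mpr h) 2).le

end cutoff

theorem abs_le_mul_of_abs_deriv_le {H : ℝ → ℝ} {a b t₀ t K : ℝ} (hH : Differentiable ℝ H)
    (hK : ∀ s ∈ Icc a b, |deriv H s| ≤ K) (ht₀ : t₀ ∈ Icc a b) (h₀ : H t₀ = 0)
    (ht : t ∈ Icc a b) : |H t| ≤ K * (b - a) := by
  have hMVT := (convex_Icc a b).norm_image_sub_le_of_norm_deriv_le (fun s _ => hH s)
    (fun s hs => by simpa only [Real.norm_eq_abs] using hK s hs) ht₀ ht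
  rw [h₀, sub_zero, Real.norm_eq_abs, Real.norm_eq_abs] at hMVT
  refine hMVT.trans (mul_le_mul_of_nonneg_left ?_ ((abs_nonneg _).trans (hK t₀ ht₀)))
  exact abs_sub_le_iff.mpr ⟨by linarith [ht.2, ht₀.1], by linarith [ht.1, ht₀.2]⟩

section TwoZeros

variable {H : ℝ → ℝ} {a b K t : ℝ}

theorem abs_deriv_le_of_eq_zero_of_eq_zero (hH : ContDiff ℝ 2 H) (hab : a < b) (ha : H a = 0)
    (hb : H b = 0) (hK : ∀ s ∈ Icc a b, |deriv (deriv H) s| ≤ K) (ht : t ∈ Icc a b) :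
    |deriv H t| ≤ K * (b - a) := by
  obtain ⟨ξ, hξ, hξ₀⟩ := exists_deriv_eq_zero hab hH.continuous.continuousOn (ha.trans hb.symm)
  exact abs_le_mul_of_abs_deriv_le hH.differentiable_deriv_two hK (Ioo_subset_Icc_self hξ) hξ₀ ht

theorem C2BoundOn.abs_le_of_eq_zero_of_eq_zero (h : C2BoundOn H (Icc a b) K)
    (hH : ContDiff ℝ 2 H) (hab : a < b) (ha : H a = 0) (hb : H b = 0) (ht : t ∈ Icc a b) :
    |H t| ≤ K * (b - a) ∧ |H t| ≤ K * (b - a) ^ 2 ∧ |deriv H t| ≤ K * (b - a) := by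
  have hd (s) (hs : s ∈ Icc a b) : |deriv H s| ≤ K * (b - a) :=
    abs_deriv_le_of_eq_zero_of_eq_zero hH hab ha hb (fun s hs => (h s hs).2.2) hs
  have ha' : a ∈ Icc a b := left_mem_Icc.mpr hab.le
  refine ⟨abs_le_mul_of_abs_deriv_le (hH.differentiable two_ne_zero) (fun s hs => (h s hs).2.1)
    ha' ha ht, ?_, hd t ht⟩
  rw [sq, ← mul_assoc]
  exact abs_le_mul_of_abs_deriv_le (hH.differentiable two_ne_zero) hd ha' ha ht

end TwoZeros

section AddMul

variable {f u v : ℝ → ℝ}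

theorem deriv_add_mul (hf : ContDiff ℝ 2 f) (hu : ContDiff ℝ 2 u) (hv : ContDiff ℝ 2 v) (t : ℝ) :
    deriv (f + u * v) t = deriv f t + (deriv u t * v t + u t * deriv v t) := by
  have d {g : ℝ → ℝ} (hg : ContDiff ℝ 2 g) : DifferentiableAt ℝ g t :=
    hg.differentiable two_ne_zero t
  rw [deriv_add (d hf) ((d hu).mul (d hv)), deriv_mul (d hu) (d hv)]

theorem deriv_deriv_add_mul (hf : ContDiff ℝ 2 f) (hu : ContDiff ℝ 2 u) (hv : ContDiff ℝ 2 v)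
    (t : ℝ) :
    deriv (deriv (f + u * v)) t = deriv (deriv f) t +
      (deriv (deriv u) t * v t + 2 * (deriv u t * deriv v t) + u t * deriv (deriv v) t) := by
  have h2 {g : ℝ → ℝ} : deriv (deriv g) = iteratedDeriv 2 g := by
    rw [iteratedDeriv_succ, iteratedDeriv_one]
  rw [h2, iteratedDeriv_add (g := u * v) hf.contDiffAt (hu.mul hv).contDiffAt,
    iteratedDeriv_mul hu.contDiffAt hv.contDiffAt, h2]
  simp only [iteratedDeriv_succ, iteratedDeriv_zero, Finset.sum_range_succ, Finset.range_one,
    Finset.sum_singleton, Nat.choose_zero_right, Nat.choose_succ_self_right, Nat.choose_self,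
    Nat.cast_one, Nat.cast_ofNat, one_mul, Nat.reduceAdd, tsub_zero, tsub_self, Nat.add_one_sub_one]
  ring

end AddMul

theorem abs_mul_le_of_abs_le_div {p q A B u : ℝ} (hu : 0 < u) (hp : |p| ≤ A / u)
    (hq : |q| ≤ B * u) : |p * q| ≤ A * B := by
  rw [abs_mul]
  calc |p| * |q| ≤ A / u * (B * u) := mul_le_mul hp hq (abs_nonneg _) ((abs_nonneg _).trans hp)
    _ = A * B := by field_simp

theorem abs_cutoff_mul_le {m₁ m₂ t : ℝ} (x : ℝ) : |cutoff m₁ m₂ t * x| ≤ |x| := by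
  rw [abs_mul, abs_of_nonneg cutoff_nonneg]
  exact mul_le_of_le_one_left (abs_nonneg _) cutoff_le_one

def glue (F₁ F₂ : ℝ → ℝ) (a b : ℝ) : ℝ → ℝ :=
  F₂ + cutoff ((3 * a + b) / 4) ((a + 3 * b) / 4) * (F₁ - F₂)

section glue

variable {F₁ F₂ : ℝ → ℝ} {a b : ℝ}

theorem contDiff_glue {n : ℕ∞} (h₁ : ContDiff ℝ n F₁) (h₂ : ContDiff ℝ n F₂) :
    ContDiff ℝ n (glue F₁ F₂ a b) :=
  h₂.add (contDiff_cutoff.mul (h₁.sub h₂))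

theorem glue_apply (t : ℝ) : glue F₁ F₂ a b t =
    cutoff ((3 * a + b) / 4) ((a + 3 * b) / 4) t * F₁ t +
      (1 - cutoff ((3 * a + b) / 4) ((a + 3 * b) / 4) t) * F₂ t := by
  simp only [glue, Pi.add_apply, Pi.mul_apply, Pi.sub_apply]
  ring

theorem glue_nonneg (h₁ : ∀ t, 0 ≤ F₁ t) (h₂ : ∀ t, 0 ≤ F₂ t) (t : ℝ) : 0 ≤ glue F₁ F₂ a b t := by
  rw [glue_apply]
  exact add_nonneg (mul_nonneg cutoff_nonneg (h₁ t))
    (mul_nonneg (sub_nonneg.mpr cutoff_le_one) (h₂ t))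

theorem abs_glue_le {M t : ℝ} (h₁ : |F₁ t| ≤ M) (h₂ : |F₂ t| ≤ M) :
    |glue F₁ F₂ a b t| ≤ M := by
  rw [glue_apply, abs_le, ← mem_Icc]
  exact convex_Icc (-M) M (abs_le.mp h₁) (abs_le.mp h₂) cutoff_nonneg
    (sub_nonneg.mpr cutoff_le_one) (add_sub_cancel _ 1)

theorem glue_eqOn_left (hab : a < b) : EqOn (glue F₁ F₂ a b) F₁ (Iio ((3 * a + b) / 4)) := by
  intro t ht
  rw [glue_apply, cutoff_eq_one (by linarith) (le_of_lt ht)]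
  ring

theorem glue_eqOn_right (hab : a < b) : EqOn (glue F₁ F₂ a b) F₂ (Ioi ((a + 3 * b) / 4)) := by
  intro t ht
  rw [glue_apply, cutoff_eq_zero (by linarith) (le_of_lt ht)]
  ring

theorem c2BoundOn_glue {M : ℝ} (h₁ : ContDiff ℝ 2 F₁) (h₂ : ContDiff ℝ 2 F₂) (hab : a < b)
    (ha : F₁ a = F₂ a) (hb : F₁ b = F₂ b) (hM₁ : C2BoundOn F₁ (Icc a b) M)
    (hM₂ : C2BoundOn F₂ (Icc a b) M) :
    C2BoundOn (glue F₁ F₂ a b) (Icc a b) ((3 + 16 * smoothTransitionDerivBound) * M) := by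
  intro t ht
  have hδ : 0 < b - a := sub_pos.mpr hab
  have hc₀ := smoothTransitionDerivBound_nonneg
  have hM₀ : 0 ≤ M := hM₁.nonneg ht
  have hm : (a + 3 * b) / 4 - (3 * a + b) / 4 = (b - a) / 2 := by ring
  have hψ₁ := abs_deriv_cutoff_le (t := t) (show (3 * a + b) / 4 < (a + 3 * b) / 4 by linarith)
  have hψ₂ := abs_deriv_deriv_cutoff_le (t := t)
    (show (3 * a + b) / 4 < (a + 3 * b) / 4 by linarith)
  rw [hm, div_div_eq_mul_div] at hψ₁
  rw [hm, div_pow, div_div_eq_mul_div] at hψ₂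
  have hHc : ContDiff ℝ 2 (F₁ - F₂) := h₁.sub h₂
  have hH := hM₁.sub h₁ h₂ hM₂
  obtain ⟨hH₀, hH₀', hH₁⟩ := hH.abs_le_of_eq_zero_of_eq_zero hHc hab
    (sub_eq_zero.mpr ha) (sub_eq_zero.mpr hb) ht
  refine ⟨(abs_glue_le (hM₁ t ht).1 (hM₂ t ht).1).trans (by nlinarith), ?_, ?_⟩
  · rw [glue, deriv_add_mul h₂ contDiff_cutoff hHc]
    calc _ ≤ |deriv F₂ t| + (|deriv (cutoff _ _) t * (F₁ - F₂) t| +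
            |cutoff _ _ t * deriv (F₁ - F₂) t|) :=
          (abs_add_le _ _).trans (add_le_add_right (abs_add_le _ _) _)
      _ ≤ M + (smoothTransitionDerivBound * 2 * (M + M) + (M + M)) := by
          gcongr
          exacts [(hM₂ t ht).2.1, abs_mul_le_of_abs_le_div hδ hψ₁ hH₀,
            (abs_cutoff_mul_le _).trans (hH t ht).2.1]
      _ ≤ (3 + 16 * smoothTransitionDerivBound) * M := by nlinarith
  · rw [glue, deriv_deriv_add_mul h₂ contDiff_cutoff hHc]
    calc _ ≤ |deriv (deriv F₂) t| + (|deriv (deriv (cutoff _ _)) t * (F₁ - F₂) t| +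
            2 * |deriv (cutoff _ _) t * deriv (F₁ - F₂) t| +
            |cutoff _ _ t * deriv (deriv (F₁ - F₂)) t|) := by
          refine (abs_add_le _ _).trans (add_le_add_right ((abs_add_three _ _ _).trans ?_) _)
          rw [abs_mul 2, abs_two]
      _ ≤ M + (smoothTransitionDerivBound * 2 ^ 2 * (M + M) +
            2 * (smoothTransitionDerivBound * 2 * (M + M)) + (M + M)) := by
          gcongr
          exacts [(hM₂ t ht).2.2, abs_mul_le_of_abs_le_div (pow_pos hδ 2) hψ₂ hH₀',
            abs_mul_le_of_abs_le_div hδ hψ₁ hH₁, (abs_cutoff_mul_le _).trans (hH t ht).2.2]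
      _ = (3 + 16 * smoothTransitionDerivBound) * M := by ring

theorem c2BoundOn_univ_glue {M K : ℝ} (h₁ : ContDiff ℝ 2 F₁) (h₂ : ContDiff ℝ 2 F₂) (hab : a < b)
    (ha : F₁ a = F₂ a) (hb : F₁ b = F₂ b) (hM₁ : C2BoundOn F₁ (Icc a b) M)
    (hM₂ : C2BoundOn F₂ (Icc a b) M) (hK₁ : C2BoundOn F₁ univ K) (hK₂ : C2BoundOn F₂ univ K)
    (hMK : (3 + 16 * smoothTransitionDerivBound) * M ≤ K) :
    C2BoundOn (glue F₁ F₂ a b) univ K := by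
  have hcover : univ ⊆ Iio ((3 * a + b) / 4) ∪ Icc a b ∪ Ioi ((a + 3 * b) / 4) := by
    intro t _
    by_cases hta : t < a
    · exact Or.inl (Or.inl (by simp only [mem_Iio]; linarith))
    by_cases htb : t ≤ b
    · exact Or.inl (Or.inr ⟨not_lt.mp hta, htb⟩)
    · exact Or.inr (by simp only [mem_Ioi]; linarith)
  refine (C2BoundOn.union (C2BoundOn.union ?_ ?_) ?_).mono hcover
  · exact (hK₁.mono (subset_univ _)).congr isOpen_Iio (glue_eqOn_left hab).symm
  · exact (c2BoundOn_glue h₁ h₂ hab ha hb hM₁ hM₂).mono_right hMK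
  · exact (hK₂.mono (subset_univ _)).congr isOpen_Ioi (glue_eqOn_right hab).symm

end glue

section Interpolation

variable {M : ℝ} {N : ℕ} {x : ℕ → ℝ} {f : ℝ → ℝ}

theorem exists_interpolant_of_consecutive (hx : ∀ i j : ℕ, i < j → j < N → x i < x j)
    (hloc : ∀ j : ℕ, j + 2 < N → ∃ Fj : ℝ → ℝ, ContDiff ℝ 2 Fj ∧ (∀ t, 0 ≤ Fj t) ∧
      (Fj (x j) = f (x j) ∧ Fj (x (j + 1)) = f (x (j + 1)) ∧ Fj (x (j + 2)) = f (x (j + 2))) ∧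
      C2NormLE Fj M) :
    ∀ j, j + 2 < N → ∃ G : ℝ → ℝ, ContDiff ℝ 2 G ∧ (∀ t, 0 ≤ G t) ∧
      (∀ i ≤ j + 2, G (x i) = f (x i)) ∧
      C2BoundOn G univ ((3 + 16 * smoothTransitionDerivBound) * M) ∧
      -- to the right of `y`, `G` is still the local interpolant `F_j`
      ∃ y < x (j + 1), C2BoundOn G (Ioi y) M := by
  have hc₀ := smoothTransitionDerivBound_nonneg
  intro j
  induction j with
  | zero =>
    intro hN
    obtain ⟨F, hFc, hF₀, ⟨hF₁, hF₂, hF₃⟩, hFM⟩ := hloc 0 hN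
    have hM : C2BoundOn F univ M := hFM.c2BoundOn
    have hM₀ : 0 ≤ M := hM.nonneg (mem_univ 0)
    refine ⟨F, hFc, hF₀, ?_, hM.mono_right (by nlinarith), x 0, hx 0 1 one_pos (by omega),
      hM.mono (subset_univ _)⟩
    intro i hi
    interval_cases i <;> assumption
  | succ j ih =>
    intro hN
    obtain ⟨G, hGc, hG₀, hGf, hGK, y, hy, hGM⟩ := ih (by omega)
    obtain ⟨F, hFc, hF₀, ⟨hF₁, hF₂, hF₃⟩, hFM⟩ := hloc (j + 1) hN
    have hM : C2BoundOn F univ M := hFM.c2BoundOn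
    have hM₀ : 0 ≤ M := hM.nonneg (mem_univ 0)
    have hab : x (j + 1) < x (j + 2) := hx _ _ (by omega) (by omega)
    refine ⟨glue G F (x (j + 1)) (x (j + 2)), contDiff_glue hGc hFc, glue_nonneg hG₀ hF₀, ?_, ?_,
      (x (j + 1) + 3 * x (j + 2)) / 4, by linarith,
      (hM.mono (subset_univ _)).congr isOpen_Ioi (glue_eqOn_right hab).symm⟩
    · intro i hi
      rcases (show i ≤ j + 1 ∨ i = j + 2 ∨ i = j + 3 by omega) with hi | rfl | rfl
      · have hxi : x i ≤ x (j + 1) :=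
          (eq_or_lt_of_le hi).elim (fun h => h ▸ le_rfl) fun h => (hx _ _ h (by omega)).le
        exact (glue_eqOn_left hab (show x i ∈ Iio _ by simp only [mem_Iio]; linarith)).trans
          (hGf i (by omega))
      · exact (glue_eqOn_right hab (show x (j + 2) ∈ Ioi _ by simp only [mem_Ioi]; linarith)).trans
          hF₂
      · have hxj : x (j + 2) < x (j + 3) := hx _ _ (by omega) hN
        exact (glue_eqOn_right hab (show x (j + 3) ∈ Ioi _ by simp only [mem_Ioi]; linarith)).trans
          hF₃
    · have ha : G (x (j + 1)) = F (x (j + 1)) := (hGf _ (by omega)).trans hF₁.symm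
      have hb : G (x (j + 2)) = F (x (j + 2)) := (hGf _ le_rfl).trans hF₂.symm
      have hIcc : Icc (x (j + 1)) (x (j + 2)) ⊆ Ioi y := fun t ht => hy.trans_le ht.1
      exact c2BoundOn_univ_glue hGc hFc hab ha hb (hGM.mono hIcc) (hM.mono (subset_univ _))
        hGK (hM.mono_right (by nlinarith)) le_rfl

end Interpolation

/-- **1-D Finiteness Principle for nonnegative `C²` interpolation.**
If every three consecutive points of `E = {x 0 < x 1 < ⋯ < x (N-1)}` (with `N ≥ 3`) admit a
nonnegative `C²` interpolant of norm at most `M`, then all of `E` admits a nonnegative `C²`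
interpolant of norm at most `C * M`, for a universal constant `C`. -/
theorem nonneg_C2_finiteness_principle_one_dim :
    ∃ C : ℝ, 0 < C ∧
      ∀ (N : ℕ) (x : ℕ → ℝ) (f : ℝ → ℝ) (M : ℝ),
        3 ≤ N →
        (∀ i j : ℕ, i < j → j < N → x i < x j) →
        (∀ i : ℕ, i < N → 0 ≤ f (x i)) →
        0 < M →
        (∀ j : ℕ, j + 2 < N →
          ∃ Fj : ℝ → ℝ, ContDiff ℝ 2 Fj ∧ (∀ t : ℝ, 0 ≤ Fj t) ∧
            (Fj (x j) = f (x j) ∧ Fj (x (j + 1)) = f (x (j + 1)) ∧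
              Fj (x (j + 2)) = f (x (j + 2))) ∧
            C2NormLE Fj M) →
        ∃ F : ℝ → ℝ, ContDiff ℝ 2 F ∧ (∀ t : ℝ, 0 ≤ F t) ∧
          (∀ i : ℕ, i < N → F (x i) = f (x i)) ∧ C2NormLE F (C * M) := by
  have hc₀ := smoothTransitionDerivBound_nonneg
  refine ⟨3 * (3 + 16 * smoothTransitionDerivBound), by positivity, ?_⟩
  intro N x f M hN hx _ _ hloc
  obtain ⟨G, hGc, hG₀, hGf, hGB, -⟩ :=
    exists_interpolant_of_consecutive hx hloc (N - 3) (by omega)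
  refine ⟨G, hGc, hG₀, fun i hi => hGf i (by omega), ?_⟩
  rw [mul_assoc]
  exact hGB.c2NormLE
end
end

section
/- There exists a universal constant C > 0 such that the following holds. Let E = {x₁, …, x_N} ⊂ ℝ be a finite set with x₁ < … < x_N and N ≥ 3, let f : E → ℝ, and let A₀, A₁, A₂ > 0. Suppose that for every j = 1, …, N − 2 there exists a twice continuously differentiable function F_j : ℝ → ℝ with F_j(x_i) = f(x_i) for i ∈ {j, j+1, j+2} and |∂^m F_j(x)| ≤ A_m for all x ∈ ℝ and m = 0, 1, 2. Then there exists a twice continuously differentiable F : ℝ → ℝ with F(x) = f(x) for all x ∈ E and |∂^m F(x)| ≤ C·A_m for all x ∈ ℝ and m = 0, 1, 2. -/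
/-!
Consecutive local interpolants `F j`, `F (j + 1)` are blended on `[x (j + 1), x (j + 2)]` by
`F j + ψ ((t - x (j + 1)) / δ) * (F (j + 1) - F j)`, with `ψ` a smooth step from `0` to `1` and
`δ = x (j + 2) - x (j + 1)`. Both interpolate `f` at the two ends, so their difference `d`
vanishes there; by Rolle and the mean value theorem `|d| ≤ 2 A₁ δ`, `|d| ≤ 2 A₂ δ²` and
`|d'| ≤ 2 A₂ δ` on that interval, which exactly absorb the factors `δ⁻¹`, `δ⁻²` produced by
differentiating `ψ ((t - x (j + 1)) / δ)`. Away from the transition intervals the glued function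
coincides with a single `F j`. This gives `C = 3 + 6 K` with `K` a bound for `|ψ'|` and `|ψ''|`.
-/

open Set Topology

lemma StrictMonoOn.lt_of_Iic {β : Type*} [Preorder β] {x : ℕ → β} {n i j : ℕ}
    (hx : StrictMonoOn x (Iic n)) (hij : i < j) (hj : j ≤ n) : x i < x j :=
  hx (mem_Iic.2 (hij.le.trans hj)) (mem_Iic.2 hj) hij

lemma StrictMonoOn.le_of_Iic {β : Type*} [Preorder β] {x : ℕ → β} {n i j : ℕ}
    (hx : StrictMonoOn x (Iic n)) (hij : i ≤ j) (hj : j ≤ n) : x i ≤ x j :=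
  hx.monotoneOn (mem_Iic.2 (hij.trans hj)) (mem_Iic.2 hj) hij

namespace C2Finiteness

local notation "ψ" => Real.smoothTransition

def C2BoundedOn (F : ℝ → ℝ) (A₀ A₁ A₂ : ℝ) (s : Set ℝ) : Prop :=
  ∀ t ∈ s, |F t| ≤ A₀ ∧ |deriv F t| ≤ A₁ ∧ |deriv (deriv F) t| ≤ A₂

lemma eqOn_deriv_of_uniqueDiffOn {𝕜 E : Type*} [NontriviallyNormedField 𝕜]
    [NormedAddCommGroup E] [NormedSpace 𝕜 E] {f g : 𝕜 → E} {s : Set 𝕜}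
    (hs : UniqueDiffOn 𝕜 s) (hf : Differentiable 𝕜 f) (hg : Differentiable 𝕜 g)
    (h : EqOn f g s) : EqOn (deriv f) (deriv g) s := fun t ht => by
  rw [← (hf t).derivWithin (hs t ht), ← (hg t).derivWithin (hs t ht),
    derivWithin_congr h (h ht)]

lemma C2BoundedOn.congr {F G : ℝ → ℝ} {A₀ A₁ A₂ : ℝ} {s : Set ℝ} (hG : C2BoundedOn G A₀ A₁ A₂ s)
    (hs : UniqueDiffOn ℝ s) (hF₂ : ContDiff ℝ 2 F) (hG₂ : ContDiff ℝ 2 G) (h : EqOn F G s) :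
    C2BoundedOn F A₀ A₁ A₂ s := by
  have h₁ := eqOn_deriv_of_uniqueDiffOn hs (hF₂.differentiable two_ne_zero)
    (hG₂.differentiable two_ne_zero) h
  have h₂ := eqOn_deriv_of_uniqueDiffOn hs hF₂.differentiable_deriv_two
    hG₂.differentiable_deriv_two h₁
  intro t ht
  rw [h ht, h₁ ht, h₂ ht]
  exact hG t ht

lemma C2BoundedOn.mono {F : ℝ → ℝ} {A₀ A₁ A₂ B₀ B₁ B₂ : ℝ} {s t : Set ℝ}
    (h : C2BoundedOn F A₀ A₁ A₂ s) (hts : t ⊆ s) (h₀ : A₀ ≤ B₀) (h₁ : A₁ ≤ B₁) (h₂ : A₂ ≤ B₂) :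
    C2BoundedOn F B₀ B₁ B₂ t := fun u hu =>
  let ⟨e₀, e₁, e₂⟩ := h u (hts hu)
  ⟨e₀.trans h₀, e₁.trans h₁, e₂.trans h₂⟩

lemma C2BoundedOn.const_mul {F : ℝ → ℝ} {A₀ A₁ A₂ C : ℝ} {s : Set ℝ}
    (h : C2BoundedOn F A₀ A₁ A₂ s) (hC : 1 ≤ C) : C2BoundedOn F (C * A₀) (C * A₁) (C * A₂) s :=
  fun u hu =>
  let ⟨e₀, e₁, e₂⟩ := h u hu
  ⟨e₀.trans (le_mul_of_one_le_left ((abs_nonneg _).trans e₀) hC),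
    e₁.trans (le_mul_of_one_le_left ((abs_nonneg _).trans e₁) hC),
    e₂.trans (le_mul_of_one_le_left ((abs_nonneg _).trans e₂) hC)⟩

lemma C2BoundedOn.sub {F G : ℝ → ℝ} {A₀ A₁ A₂ B₀ B₁ B₂ : ℝ} {s : Set ℝ}
    (hF : C2BoundedOn F A₀ A₁ A₂ s) (hG : C2BoundedOn G B₀ B₁ B₂ s)
    (hF₂ : ContDiff ℝ 2 F) (hG₂ : ContDiff ℝ 2 G) :
    C2BoundedOn (fun t => F t - G t) (A₀ + B₀) (A₁ + B₁) (A₂ + B₂) s := by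
  have h₁ : deriv (fun t => F t - G t) = fun t => deriv F t - deriv G t :=
    funext fun t =>
      deriv_fun_sub (hF₂.differentiable two_ne_zero t) (hG₂.differentiable two_ne_zero t)
  have h₂ : deriv (fun t => deriv F t - deriv G t) =
      fun t => deriv (deriv F) t - deriv (deriv G) t :=
    funext fun t => deriv_fun_sub (hF₂.differentiable_deriv_two t) (hG₂.differentiable_deriv_two t)
  intro t ht
  obtain ⟨f₀, f₁, f₂⟩ := hF t ht
  obtain ⟨g₀, g₁, g₂⟩ := hG t ht
  rw [h₁, h₂]
  exact ⟨(abs_sub _ _).trans (add_le_add f₀ g₀), (abs_sub _ _).trans (add_le_add f₁ g₁),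
    (abs_sub _ _).trans (add_le_add f₂ g₂)⟩

lemma abs_le_of_eq_zero_of_abs_deriv_le {d : ℝ → ℝ} {a b c B t : ℝ} (hd : Differentiable ℝ d)
    (hB : ∀ s ∈ Icc a b, |deriv d s| ≤ B) (hc : c ∈ Icc a b) (hdc : d c = 0)
    (ht : t ∈ Icc a b) : |d t| ≤ B * (b - a) := by
  have hmvt := (convex_Icc a b).norm_image_sub_le_of_norm_deriv_le (fun s _ => hd s) hB hc ht
  rw [hdc, sub_zero, Real.norm_eq_abs, Real.norm_eq_abs] at hmvt
  have hdist : |t - c| ≤ b - a :=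
    abs_sub_le_iff.2 ⟨by linarith [ht.2, hc.1], by linarith [ht.1, hc.2]⟩
  exact hmvt.trans (mul_le_mul_of_nonneg_left hdist ((abs_nonneg _).trans (hB c hc)))

lemma abs_deriv_le_of_eq_zero_of_eq_zero {d : ℝ → ℝ} {a b B t : ℝ} (hd : ContDiff ℝ 2 d)
    (hab : a < b) (ha : d a = 0) (hb : d b = 0) (hB : ∀ s ∈ Icc a b, |deriv (deriv d) s| ≤ B)
    (ht : t ∈ Icc a b) : |deriv d t| ≤ B * (b - a) := by
  obtain ⟨c, hc, hdc⟩ := exists_deriv_eq_zero hab hd.continuous.continuousOn (ha.trans hb.symm)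
  exact abs_le_of_eq_zero_of_abs_deriv_le hd.differentiable_deriv_two hB (Ioo_subset_Icc_self hc)
    hdc ht

lemma abs_le_of_eq_zero_of_eq_zero {d : ℝ → ℝ} {a b B₁ B₂ t : ℝ} (hd : ContDiff ℝ 2 d)
    (hab : a < b) (ha : d a = 0) (hb : d b = 0) (hB₁ : ∀ s ∈ Icc a b, |deriv d s| ≤ B₁)
    (hB₂ : ∀ s ∈ Icc a b, |deriv (deriv d) s| ≤ B₂) (ht : t ∈ Icc a b) :
    |d t| ≤ B₁ * (b - a) ∧ |d t| ≤ B₂ * (b - a) ^ 2 ∧ |deriv d t| ≤ B₂ * (b - a) := by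
  have hd' : ∀ s ∈ Icc a b, |deriv d s| ≤ B₂ * (b - a) := fun s hs =>
    abs_deriv_le_of_eq_zero_of_eq_zero hd hab ha hb hB₂ hs
  refine ⟨abs_le_of_eq_zero_of_abs_deriv_le (hd.differentiable two_ne_zero) hB₁
    (left_mem_Icc.2 hab.le) ha ht, ?_, hd' t ht⟩
  rw [sq, ← mul_assoc]
  exact abs_le_of_eq_zero_of_abs_deriv_le (hd.differentiable two_ne_zero) hd'
    (left_mem_Icc.2 hab.le) ha ht

lemma hasDerivAt_comp_sub_div {g : ℝ → ℝ} {g' a δ t : ℝ} (hg : HasDerivAt g g' ((t - a) / δ)) :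
    HasDerivAt (fun s => g ((s - a) / δ)) (g' / δ) t := by
  simpa [Function.comp_def, div_eq_mul_inv] using
    hg.comp t (((hasDerivAt_id t).sub_const a).div_const δ)

lemma deriv_comp_sub_div {g : ℝ → ℝ} (hg : Differentiable ℝ g) (a δ : ℝ) :
    deriv (fun s => g ((s - a) / δ)) = fun t => deriv g ((t - a) / δ) / δ :=
  funext fun _ => (hasDerivAt_comp_sub_div (hg _).hasDerivAt).deriv

lemma deriv_add_mul {u v w : ℝ → ℝ} (hu : Differentiable ℝ u) (hv : Differentiable ℝ v)
    (hw : Differentiable ℝ w) :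
    deriv (fun t => u t + v t * w t) = fun t => deriv u t + (deriv v t * w t + v t * deriv w t) :=
  funext fun t => ((hu t).hasDerivAt.fun_add ((hv t).hasDerivAt.fun_mul (hw t).hasDerivAt)).deriv

lemma deriv_deriv_add_mul {u v w : ℝ → ℝ} (hu : ContDiff ℝ 2 u) (hv : ContDiff ℝ 2 v)
    (hw : ContDiff ℝ 2 w) :
    deriv (deriv (fun t => u t + v t * w t)) = fun t => deriv (deriv u) t +
      (deriv (deriv v) t * w t + 2 * (deriv v t * deriv w t) + v t * deriv (deriv w) t) := by
  have h₁ {f : ℝ → ℝ} (hf : ContDiff ℝ 2 f) := hf.differentiable two_ne_zero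
  have h₂ {f : ℝ → ℝ} (hf : ContDiff ℝ 2 f) := hf.differentiable_deriv_two
  rw [deriv_add_mul (h₁ hu) (h₁ hv) (h₁ hw)]
  funext t
  rw [((h₂ hu t).hasDerivAt.fun_add (((h₂ hv t).hasDerivAt.fun_mul (h₁ hw t).hasDerivAt).fun_add
    ((h₁ hv t).hasDerivAt.fun_mul (h₂ hw t).hasDerivAt))).deriv]
  ring

lemma smoothTransition_eventuallyEq_const {s : ℝ} (hs : s ∉ Icc 0 1) :
    ψ =ᶠ[𝓝 s] fun _ => ψ s := by
  rcases not_and_or.1 hs with hs | hs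
  · filter_upwards [Iio_mem_nhds (not_le.1 hs)] with u hu
    rw [Real.smoothTransition.zero_of_nonpos hu.le,
      Real.smoothTransition.zero_of_nonpos (not_le.1 hs).le]
  · filter_upwards [Ioi_mem_nhds (not_le.1 hs)] with u hu
    rw [Real.smoothTransition.one_of_one_le hu.le,
      Real.smoothTransition.one_of_one_le (not_le.1 hs).le]

lemma exists_abs_deriv_smoothTransition_le :
    ∃ K, ∀ s, |deriv ψ s| ≤ K ∧ |deriv (deriv ψ) s| ≤ K := by
  have hψ' : ContDiff ℝ 2 (deriv ψ) := (Real.smoothTransition.contDiff (n := 3)).deriv'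
  obtain ⟨K₁, hK₁⟩ := hψ'.continuous.bounded_above_of_compact_support <|
    HasCompactSupport.intro isCompact_Icc fun s hs => by
      rw [(smoothTransition_eventuallyEq_const hs).deriv_eq, deriv_const]
  obtain ⟨K₂, hK₂⟩ := (hψ'.continuous_deriv one_le_two).bounded_above_of_compact_support <|
    HasCompactSupport.intro isCompact_Icc fun s hs => by
      rw [(smoothTransition_eventuallyEq_const hs).deriv.deriv_eq, deriv_const', deriv_const]
  exact ⟨max K₁ K₂, fun s => ⟨(hK₁ s).trans (le_max_left _ _), (hK₂ s).trans (le_max_right _ _)⟩⟩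

lemma deriv_smoothTransition_comp (a δ : ℝ) :
    deriv (fun t => ψ ((t - a) / δ)) = fun t => deriv ψ ((t - a) / δ) / δ :=
  deriv_comp_sub_div (Real.smoothTransition.contDiff (n := 1).differentiable one_ne_zero) a δ

lemma deriv_deriv_smoothTransition_comp (a δ : ℝ) :
    deriv (deriv (fun t => ψ ((t - a) / δ))) =
      fun t => deriv (deriv ψ) ((t - a) / δ) / δ ^ 2 := by
  rw [deriv_smoothTransition_comp]
  funext t
  rw [deriv_div_const, deriv_comp_sub_div
    (Real.smoothTransition.contDiff (n := 2).differentiable_deriv_two), div_div, sq]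

noncomputable def blend (a b : ℝ) (G H : ℝ → ℝ) (t : ℝ) : ℝ :=
  G t + ψ ((t - a) / (b - a)) * (H t - G t)

lemma contDiff_blend {G H : ℝ → ℝ} (a b : ℝ) (hG : ContDiff ℝ 2 G) (hH : ContDiff ℝ 2 H) :
    ContDiff ℝ 2 (blend a b G H) :=
  hG.add ((Real.smoothTransition.contDiff.comp
    ((contDiff_id.sub contDiff_const).div_const _)).mul (hH.sub hG))

lemma eqOn_blend_Iic {G H : ℝ → ℝ} {a b : ℝ} (hab : a ≤ b) : EqOn (blend a b G H) G (Iic a) :=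
  fun t ht => by
    rw [blend, Real.smoothTransition.zero_of_nonpos
      (div_nonpos_of_nonpos_of_nonneg (sub_nonpos.2 ht) (sub_nonneg.2 hab)), zero_mul, add_zero]

lemma eqOn_blend_Ici {G H : ℝ → ℝ} {a b : ℝ} (hab : a < b) : EqOn (blend a b G H) H (Ici b) :=
  fun t ht => by
    rw [blend, Real.smoothTransition.one_of_one_le
      ((one_le_div (sub_pos.2 hab)).2 (sub_le_sub_right ht a)), one_mul, add_sub_cancel]

lemma abs_div_mul_le {p q r K B : ℝ} (hr : 0 < r) (hp : |p| ≤ K) (hq : |q| ≤ B * r) :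
    |p / r * q| ≤ K * B := by
  rw [abs_mul, abs_div, abs_of_pos hr, div_mul_eq_mul_div, div_le_iff₀ hr, mul_assoc]
  exact mul_le_mul hp hq (abs_nonneg _) ((abs_nonneg _).trans hp)

lemma abs_smoothTransition_mul_le (s y : ℝ) : |ψ s * y| ≤ |y| := by
  rw [abs_mul, abs_of_nonneg (Real.smoothTransition.nonneg s)]
  exact mul_le_of_le_one_left (abs_nonneg y) (Real.smoothTransition.le_one s)

lemma c2BoundedOn_blend_Icc {G H : ℝ → ℝ} {a b K A₀ A₁ A₂ : ℝ}
    (hK : ∀ s, |deriv ψ s| ≤ K ∧ |deriv (deriv ψ) s| ≤ K) (hab : a < b)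
    (hG : ContDiff ℝ 2 G) (hH : ContDiff ℝ 2 H) (ha : G a = H a) (hb : G b = H b)
    (hGb : C2BoundedOn G A₀ A₁ A₂ univ) (hHb : C2BoundedOn H A₀ A₁ A₂ univ) :
    C2BoundedOn (blend a b G H) (3 * A₀) ((3 + 2 * K) * A₁) ((3 + 6 * K) * A₂) (Icc a b) := by
  set δ := b - a
  have hδ : 0 < δ := sub_pos.2 hab
  set φ : ℝ → ℝ := fun t => ψ ((t - a) / δ)
  set d : ℝ → ℝ := fun t => H t - G t
  have hφ : ContDiff ℝ 2 φ :=
    Real.smoothTransition.contDiff.comp ((contDiff_id.sub contDiff_const).div_const _)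
  have hd : ContDiff ℝ 2 d := hH.sub hG
  have hdb : C2BoundedOn d (A₀ + A₀) (A₁ + A₁) (A₂ + A₂) (Icc a b) :=
    (hHb.sub hGb hH hG).mono (subset_univ _) le_rfl le_rfl le_rfl
  intro t ht
  obtain ⟨g₀, g₁, g₂⟩ := hGb t trivial
  obtain ⟨d₀, d'₁, d''₂⟩ := hdb t ht
  obtain ⟨dδ₁, dδ₂, d'δ₂⟩ := abs_le_of_eq_zero_of_eq_zero hd hab (sub_eq_zero.2 ha.symm)
    (sub_eq_zero.2 hb.symm) (fun s hs => (hdb s hs).2.1) (fun s hs => (hdb s hs).2.2) ht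
  have hblend : blend a b G H = fun t => G t + φ t * d t := rfl
  refine ⟨?_, ?_, ?_⟩
  · rw [hblend]
    have := abs_add_le (G t) (φ t * d t)
    have := abs_smoothTransition_mul_le ((t - a) / δ) (d t)
    linarith
  · rw [hblend, deriv_add_mul (hG.differentiable two_ne_zero) (hφ.differentiable two_ne_zero)
      (hd.differentiable two_ne_zero), deriv_smoothTransition_comp]
    have := abs_add_le (deriv G t) (deriv ψ ((t - a) / δ) / δ * d t + φ t * deriv d t)
    have := abs_add_le (deriv ψ ((t - a) / δ) / δ * d t) (φ t * deriv d t)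
    have := abs_div_mul_le hδ (hK ((t - a) / δ)).1 dδ₁
    have := abs_smoothTransition_mul_le ((t - a) / δ) (deriv d t)
    linarith
  · rw [hblend, deriv_deriv_add_mul hG hφ hd, deriv_deriv_smoothTransition_comp,
      deriv_smoothTransition_comp]
    beta_reduce
    have h₃ := abs_add_three (deriv (deriv ψ) ((t - a) / δ) / δ ^ 2 * d t)
      (2 * (deriv ψ ((t - a) / δ) / δ * deriv d t)) (φ t * deriv (deriv d) t)
    rw [abs_mul 2, abs_two] at h₃
    have := abs_add_le (deriv (deriv G) t) (deriv (deriv ψ) ((t - a) / δ) / δ ^ 2 * d t +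
      2 * (deriv ψ ((t - a) / δ) / δ * deriv d t) + φ t * deriv (deriv d) t)
    have := abs_div_mul_le (pow_pos hδ 2) (hK ((t - a) / δ)).2 dδ₂
    have := abs_div_mul_le hδ (hK ((t - a) / δ)).1 d'δ₂
    have := abs_smoothTransition_mul_le ((t - a) / δ) (deriv (deriv d) t)
    linarith

lemma c2BoundedOn_blend {G H : ℝ → ℝ} {a b K A₀ A₁ A₂ : ℝ}
    (hK : ∀ s, |deriv ψ s| ≤ K ∧ |deriv (deriv ψ) s| ≤ K) (hab : a < b)
    (hG : ContDiff ℝ 2 G) (hH : ContDiff ℝ 2 H) (ha : G a = H a) (hb : G b = H b)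
    (hGb : C2BoundedOn G A₀ A₁ A₂ univ) (hHb : C2BoundedOn H A₀ A₁ A₂ univ) :
    C2BoundedOn (blend a b G H) ((3 + 6 * K) * A₀) ((3 + 6 * K) * A₁) ((3 + 6 * K) * A₂) univ := by
  have hK₀ : 0 ≤ K := (abs_nonneg _).trans (hK 0).1
  obtain ⟨hA₀, hA₁⟩ : 0 ≤ A₀ ∧ 0 ≤ A₁ :=
    let ⟨e₀, e₁, _⟩ := hGb 0 trivial
    ⟨(abs_nonneg _).trans e₀, (abs_nonneg _).trans e₁⟩
  have hC : 1 ≤ 3 + 6 * K := by linarith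
  have hB := contDiff_blend a b hG hH
  intro t _
  rcases le_or_gt t a with hta | hat
  · exact ((hGb.const_mul hC).mono (subset_univ _) le_rfl le_rfl le_rfl).congr
      (uniqueDiffOn_Iic a) hB hG (eqOn_blend_Iic hab.le) t hta
  rcases le_or_gt b t with hbt | htb
  · exact ((hHb.const_mul hC).mono (subset_univ _) le_rfl le_rfl le_rfl).congr
      (uniqueDiffOn_Ici b) hB hH (eqOn_blend_Ici hab) t hbt
  exact (c2BoundedOn_blend_Icc hK hab hG hH ha hb hGb hHb).mono subset_rfl
    (mul_le_mul_of_nonneg_right (by linarith) hA₀) (mul_le_mul_of_nonneg_right (by linarith) hA₁)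
    le_rfl t ⟨hat.le, htb.le⟩

lemma exists_mem_Icc_of_mem_Icc {x : ℕ → ℝ} {t : ℝ} {n : ℕ} (hn : 0 < n)
    (ht : t ∈ Icc (x 0) (x n)) : ∃ k < n, t ∈ Icc (x k) (x (k + 1)) := by
  induction n with
  | zero => exact absurd hn (lt_irrefl 0)
  | succ n ih =>
    rcases Nat.eq_zero_or_pos n with rfl | hn
    · exact ⟨0, Nat.one_pos, ht⟩
    rcases le_or_gt t (x n) with htn | hnt
    · obtain ⟨k, hk, hkt⟩ := ih hn ⟨ht.1, htn⟩
      exact ⟨k, hk.trans (Nat.lt_succ_self n), hkt⟩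
    · exact ⟨n, Nat.lt_succ_self n, hnt.le, ht.2⟩

lemma add_sum_range_sub_eq {β : Type*} [AddCommGroup β] {u v : ℕ → β} {k M : ℕ} (hk : k < M)
    (hlt : ∀ j < k, v j = u (j + 1)) (hgt : ∀ j, k < j → j < M → v j = u j) :
    u 0 + ∑ j ∈ Finset.range M, (v j - u j) = v k := by
  rw [← Finset.sum_range_add_sum_Ico _ hk.le,
    Finset.sum_congr rfl fun j hj => by rw [hlt j (Finset.mem_range.1 hj)],
    Finset.sum_range_sub, Finset.sum_eq_single_of_mem k (Finset.mem_Ico.2 ⟨le_rfl, hk⟩)]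
  · abel
  · intro j hj hjk
    obtain ⟨hkj, hjM⟩ := Finset.mem_Ico.1 hj
    rw [hgt j (lt_of_le_of_ne hkj (Ne.symm hjk)) hjM, sub_self]

noncomputable def glue (x : ℕ → ℝ) (Fs : ℕ → ℝ → ℝ) (M : ℕ) (t : ℝ) : ℝ :=
  Fs 0 t + ∑ j ∈ Finset.range M, (blend (x (j + 1)) (x (j + 2)) (Fs j) (Fs (j + 1)) t - Fs j t)

section Glue

variable {x : ℕ → ℝ} {Fs : ℕ → ℝ → ℝ} {M : ℕ}

lemma contDiff_glue (hFs : ∀ j ≤ M, ContDiff ℝ 2 (Fs j)) : ContDiff ℝ 2 (glue x Fs M) := by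
  unfold glue
  refine (hFs 0 M.zero_le).add (ContDiff.sum fun j hj => ?_)
  have hj := Finset.mem_range.1 hj
  exact (contDiff_blend _ _ (hFs j hj.le) (hFs (j + 1) hj)).sub (hFs j hj.le)

lemma eqOn_glue_Iic (hx : StrictMonoOn x (Iic (M + 2))) :
    EqOn (glue x Fs M) (Fs 0) (Iic (x 1)) := by
  intro t ht
  rw [glue, Finset.sum_eq_zero fun j hj => ?_, add_zero]
  have hj := Finset.mem_range.1 hj
  rw [eqOn_blend_Iic (hx.le_of_Iic (by omega) (by omega))
    (ht.trans (hx.le_of_Iic (by omega) (by omega))), sub_self]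

lemma eqOn_glue_Ici (hx : StrictMonoOn x (Iic (M + 2))) :
    EqOn (glue x Fs M) (Fs M) (Ici (x (M + 1))) := by
  intro t ht
  rw [glue, Finset.sum_congr rfl fun j hj => ?_, Finset.sum_range_sub (fun j => Fs j t),
    add_sub_cancel]
  have hj := Finset.mem_range.1 hj
  rw [eqOn_blend_Ici (hx.lt_of_Iic (by omega) (by omega))
    ((hx.le_of_Iic (by omega) (by omega)).trans ht)]

lemma eqOn_glue_Icc (hx : StrictMonoOn x (Iic (M + 2))) {k : ℕ} (hk : k < M) :
    EqOn (glue x Fs M) (blend (x (k + 1)) (x (k + 2)) (Fs k) (Fs (k + 1)))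
      (Icc (x (k + 1)) (x (k + 2))) := by
  intro t ht
  refine add_sum_range_sub_eq (u := fun j => Fs j t) hk (fun j hj => ?_) (fun j hkj hj => ?_)
  · exact eqOn_blend_Ici (hx.lt_of_Iic (by omega) (by omega))
      ((hx.le_of_Iic (by omega) (by omega)).trans ht.1)
  · exact eqOn_blend_Iic (hx.le_of_Iic (by omega) (by omega))
      (ht.2.trans (hx.le_of_Iic (by omega) (by omega)))

lemma glue_apply_eq {f : ℝ → ℝ} (hx : StrictMonoOn x (Iic (M + 2)))
    (hf : ∀ j ≤ M, Fs j (x j) = f (x j) ∧ Fs j (x (j + 1)) = f (x (j + 1)) ∧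
      Fs j (x (j + 2)) = f (x (j + 2)))
    {i : ℕ} (hi : i ≤ M + 2) : glue x Fs M (x i) = f (x i) := by
  rcases i with _ | k
  · rw [eqOn_glue_Iic hx (hx.le_of_Iic (by omega) (by omega))]
    exact (hf 0 M.zero_le).1
  by_cases hk : k < M
  · rw [eqOn_glue_Icc hx hk
      ⟨le_rfl, hx.le_of_Iic (by omega) (by omega)⟩,
      eqOn_blend_Iic (hx.le_of_Iic (by omega) (by omega))
        (le_refl (x (k + 1)))]
    exact (hf k hk.le).2.1
  · rw [eqOn_glue_Ici hx (hx.le_of_Iic (by omega) hi : x (M + 1) ≤ _)]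
    obtain rfl | rfl : k = M ∨ k = M + 1 := by omega
    exacts [(hf _ le_rfl).2.1, (hf _ le_rfl).2.2]

lemma c2BoundedOn_glue {f : ℝ → ℝ} {K A₀ A₁ A₂ : ℝ}
    (hK : ∀ s, |deriv ψ s| ≤ K ∧ |deriv (deriv ψ) s| ≤ K) (hx : StrictMonoOn x (Iic (M + 2)))
    (hFs : ∀ j ≤ M, ContDiff ℝ 2 (Fs j))
    (hf : ∀ j ≤ M, Fs j (x j) = f (x j) ∧ Fs j (x (j + 1)) = f (x (j + 1)) ∧
      Fs j (x (j + 2)) = f (x (j + 2)))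
    (hb : ∀ j ≤ M, C2BoundedOn (Fs j) A₀ A₁ A₂ univ) :
    C2BoundedOn (glue x Fs M) ((3 + 6 * K) * A₀) ((3 + 6 * K) * A₁) ((3 + 6 * K) * A₂) univ := by
  have hC : 1 ≤ 3 + 6 * K := by linarith [(abs_nonneg _).trans (hK 0).1]
  have hglue := contDiff_glue (x := x) hFs
  intro t _
  rcases le_or_gt t (x 1) with h1 | h1
  · exact (((hb 0 M.zero_le).const_mul hC).mono (subset_univ _) le_rfl le_rfl le_rfl).congr
      (uniqueDiffOn_Iic _) hglue (hFs 0 M.zero_le) (eqOn_glue_Iic hx) t h1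
  rcases le_or_gt (x (M + 1)) t with h2 | h2
  · exact (((hb M le_rfl).const_mul hC).mono (subset_univ _) le_rfl le_rfl le_rfl).congr
      (uniqueDiffOn_Ici _) hglue (hFs M le_rfl) (eqOn_glue_Ici hx) t h2
  have hM : 0 < M := Nat.pos_of_ne_zero fun hM => by subst hM; exact lt_asymm h1 h2
  obtain ⟨k, hk, hkt⟩ := exists_mem_Icc_of_mem_Icc (x := fun j => x (j + 1)) hM ⟨h1.le, h2.le⟩
  have hlt : x (k + 1) < x (k + 2) := hx.lt_of_Iic (by omega) (by omega)
  have hFk := hFs k hk.le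
  have hFk' := hFs (k + 1) hk
  exact ((c2BoundedOn_blend hK hlt hFk hFk' ((hf k hk.le).2.1.trans (hf (k + 1) hk).1.symm)
    ((hf k hk.le).2.2.trans (hf (k + 1) hk).2.1.symm) (hb k hk.le) (hb (k + 1) hk)).mono
    (subset_univ _) le_rfl le_rfl le_rfl).congr (uniqueDiffOn_Icc hlt) hglue
    (contDiff_blend _ _ hFk hFk') (eqOn_glue_Icc hx hk) t hkt

end Glue

end C2Finiteness

/-- **1-D Finiteness Principle for `C²` interpolation with separate derivative bounds.**
If every three consecutive points of `E = {x 0 < x 1 < ⋯ < x (N-1)}` (with `N ≥ 3`) admit a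
`C²` interpolant `F_j` with `|∂^m F_j| ≤ A m` on `ℝ` for `m = 0, 1, 2`, then all of `E`
admits a `C²` interpolant `F` with `|∂^m F| ≤ C * A m` on `ℝ` for `m = 0, 1, 2`, where `C`
is a universal constant. -/
theorem C2_finiteness_principle_one_dim_variant :
    ∃ C : ℝ, 0 < C ∧
      ∀ (N : ℕ) (x : ℕ → ℝ) (f : ℝ → ℝ) (A₀ A₁ A₂ : ℝ),
        3 ≤ N →
        (∀ i j : ℕ, i < j → j < N → x i < x j) →
        0 < A₀ → 0 < A₁ → 0 < A₂ →
        (∀ j : ℕ, j + 2 < N →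
          ∃ Fj : ℝ → ℝ, ContDiff ℝ 2 Fj ∧
            (Fj (x j) = f (x j) ∧ Fj (x (j + 1)) = f (x (j + 1)) ∧
              Fj (x (j + 2)) = f (x (j + 2))) ∧
            (∀ t : ℝ, |Fj t| ≤ A₀ ∧ |deriv Fj t| ≤ A₁ ∧ |deriv (deriv Fj) t| ≤ A₂)) →
        ∃ F : ℝ → ℝ, ContDiff ℝ 2 F ∧
          (∀ i : ℕ, i < N → F (x i) = f (x i)) ∧
          (∀ t : ℝ, |F t| ≤ C * A₀ ∧ |deriv F t| ≤ C * A₁ ∧ |deriv (deriv F) t| ≤ C * A₂) := by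
  obtain ⟨K, hK⟩ := C2Finiteness.exists_abs_deriv_smoothTransition_le
  refine ⟨3 + 6 * K, by linarith [(abs_nonneg _).trans (hK 0).1], ?_⟩
  intro N x f A₀ A₁ A₂ hN hx _ _ _ hlocal
  obtain ⟨M, rfl⟩ : ∃ M, N = M + 3 := ⟨N - 3, by omega⟩
  choose! Fs hFs using hlocal
  have hxM : StrictMonoOn x (Iic (M + 2)) := fun i _ j hj hij => hx i j hij (by grind)
  have hF₂ : ∀ j ≤ M, ContDiff ℝ 2 (Fs j) := fun j hj => (hFs j (by omega)).1
  have hf := fun j (hj : j ≤ M) => (hFs j (by omega)).2.1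
  refine ⟨C2Finiteness.glue x Fs M, C2Finiteness.contDiff_glue hF₂,
    fun i hi => C2Finiteness.glue_apply_eq hxM hf (by omega), fun t => ?_⟩
  exact C2Finiteness.c2BoundedOn_glue hK hxM hF₂ hf (fun j hj s _ => (hFs j (by omega)).2.2 s) t
    trivial
end

section
/- For every constant C > 0 there exists a finite set E ⊂ ℝ (one may take E = {0, ε, 2ε} for sufficiently small ε > 0 depending on C) such that there is no map ℰ : C²₊(E) → C²(ℝ) satisfying both of the following: (A) for all f ∈ C²₊(E), ℰ(f)(x) = f(x) for all x ∈ E, ℰ(f) ≥ 0 on ℝ, and ‖ℰ(f)‖_{C²(ℝ)} ≤ C·‖f‖_{C²₊(E)}; (B) ℰ(f + g) = ℰ(f) + ℰ(g) for all f, g ∈ C²₊(E). -/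
noncomputable section

/-- The nonnegative trace norm `‖f‖_{C²₊(E)}`:
the infimum of `‖F‖_{C²(ℝ)}` over all nonnegative `C²` extensions `F` of `f|_E`. -/
noncomputable def traceNormPlus (E : Finset ℝ) (f : ℝ → ℝ) : ℝ :=
  sInf {M : ℝ | ∃ F : ℝ → ℝ, ContDiff ℝ 2 F ∧ (∀ t : ℝ, 0 ≤ F t) ∧
    (∀ x ∈ E, F x = f x) ∧ C2NormLE F M}


/-!
Take `E = {0, ε}` and the data of `sin`, `1 + sin` and `1 - sin`. Since
`1 + sin = (1 - sin) + sin + sin`, an additive extension operator satisfies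
`2 (Ext sin)'' = (Ext (1 + sin))'' - (Ext (1 - sin))''`, and both terms on the right are bounded
by `4 C` because `1 ± sin` are nonnegative extensions of norm at most `4`. On the other hand
`Ext sin` is nonnegative and vanishes at `0`, so its derivative vanishes there, and two applications
of the mean value theorem force `(Ext sin)''` to reach `sin ε / ε² ≈ 1 / ε` on `[0, ε]`.
-/

open Real

namespace C2NormLE

variable {F : ℝ → ℝ} {M : ℝ}

lemma nonneg (h : C2NormLE F M) : 0 ≤ M :=
  (Real.sqrt_nonneg _).trans (h 0)

lemma mono (h : C2NormLE F M) {N : ℝ} (hMN : M ≤ N) : C2NormLE F N :=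
  fun x => (h x).trans hMN

lemma abs_deriv_deriv_le (h : C2NormLE F M) (x : ℝ) : |deriv (deriv F) x| ≤ M := by
  refine le_trans ?_ (h x)
  rw [← Real.sqrt_sq_eq_abs]
  exact Real.sqrt_le_sqrt (by nlinarith [sq_nonneg (F x), sq_nonneg (deriv F x)])

lemma of_abs_le {A B D : ℝ} (hF : ∀ x, |F x| ≤ A) (hF' : ∀ x, |deriv F x| ≤ B)
    (hF'' : ∀ x, |deriv (deriv F) x| ≤ D) : C2NormLE F (A + B + D) := by
  intro x
  have h₀ := abs_nonneg (F x)
  have h₁ := abs_nonneg (deriv F x)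
  have h₂ := abs_nonneg (deriv (deriv F) x)
  rw [Real.sqrt_le_iff, ← sq_abs (F x), ← sq_abs (deriv F x), ← sq_abs (deriv (deriv F) x)]
  constructor
  · linarith [hF x, hF' x, hF'' x]
  · nlinarith [hF x, hF' x, hF'' x]

end C2NormLE

lemma traceNormPlus_le {E : Finset ℝ} {f F : ℝ → ℝ} {M : ℝ} (hF : ContDiff ℝ 2 F)
    (hF_nonneg : ∀ t, 0 ≤ F t) (hFf : ∀ x ∈ E, F x = f x) (hM : C2NormLE F M) :
    traceNormPlus E f ≤ M :=
  csInf_le ⟨0, fun _ ⟨_, _, _, _, hN⟩ => hN.nonneg⟩ ⟨F, hF, hF_nonneg, hFf, hM⟩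

lemma abs_mul_sin_le_one {c : ℝ} (hc : |c| ≤ 1) (x : ℝ) : |c * sin x| ≤ 1 := by
  rw [abs_mul]
  exact mul_le_one₀ hc (abs_nonneg _) (abs_sin_le_one x)

lemma one_add_mul_sin_nonneg {c : ℝ} (hc : |c| ≤ 1) (x : ℝ) : 0 ≤ 1 + c * sin x := by
  linarith [(abs_le.mp (abs_mul_sin_le_one hc x)).1]

lemma c2NormLE_one_add_mul_sin {c : ℝ} (hc : |c| ≤ 1) :
    C2NormLE (fun x => 1 + c * sin x) 4 := by
  have hderiv : deriv (fun x => 1 + c * sin x) = fun x => c * cos x := by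
    funext x; simp
  have hderiv2 : deriv (fun x => c * cos x) = fun x => -(c * sin x) := by
    funext x; simp
  have hcos (x : ℝ) : |c * cos x| ≤ 1 := by
    rw [abs_mul]
    exact mul_le_one₀ hc (abs_nonneg _) (abs_cos_le_one x)
  rw [show (4 : ℝ) = 2 + 1 + 1 by norm_num]
  refine C2NormLE.of_abs_le (fun x => ?_) (fun x => ?_) (fun x => ?_)
  · exact (abs_add_le _ _).trans (by rw [abs_one]; linarith [abs_mul_sin_le_one hc x])
  · simpa [hderiv] using hcos x
  · simpa [hderiv, hderiv2] using abs_mul_sin_le_one hc x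

lemma traceNormPlus_one_add_mul_sin_le (E : Finset ℝ) {c : ℝ} (hc : |c| ≤ 1) :
    traceNormPlus E (fun x => 1 + c * sin x) ≤ 4 :=
  traceNormPlus_le (contDiff_const.add (contDiff_const.mul contDiff_sin))
    (one_add_mul_sin_nonneg hc) (fun _ _ => rfl) (c2NormLE_one_add_mul_sin hc)

lemma deriv_deriv_add {𝕜 F : Type*} [NontriviallyNormedField 𝕜] [NormedAddCommGroup F]
    [NormedSpace 𝕜 F] {f g : 𝕜 → F} (hf : ContDiff 𝕜 2 f) (hg : ContDiff 𝕜 2 g) (x : 𝕜) :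
    deriv (deriv (f + g)) x = deriv (deriv f) x + deriv (deriv g) x := by
  simpa [iteratedDeriv_succ, iteratedDeriv_one] using
    iteratedDeriv_add (n := 2) hf.contDiffAt hg.contDiffAt (x := x)

lemma deriv_deriv_le_of_eq_add_add {P Q R : ℝ → ℝ} {K : ℝ} (hQ : ContDiff ℝ 2 Q)
    (hR : ContDiff ℝ 2 R) (hPQR : P = Q + R + R) (hP : ∀ x, |deriv (deriv P) x| ≤ K)
    (hQK : ∀ x, |deriv (deriv Q) x| ≤ K) (x : ℝ) : deriv (deriv R) x ≤ K := by
  have hPx := hP x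
  rw [hPQR, deriv_deriv_add (f := Q + R) (hQ.add hR) hR, deriv_deriv_add hQ hR] at hPx
  linarith [(abs_le.mp hPx).2, (abs_le.mp (hQK x)).1]

lemma IsMinOn.sub_le_mul_sq {R : ℝ → ℝ} {a h K : ℝ} (hmin : IsMinOn R Set.univ a)
    (hR : Differentiable ℝ R) (hR' : Differentiable ℝ (deriv R))
    (hK : ∀ x, deriv (deriv R) x ≤ K) (hh : 0 < h) : R (a + h) - R a ≤ K * h ^ 2 := by
  have hR'a : deriv R a = 0 := (hmin.isLocalMin Filter.univ_mem).deriv_eq_zero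
  obtain ⟨c, ⟨hac, hch⟩, hRc⟩ := exists_deriv_eq_slope R (lt_add_of_pos_right a hh)
    hR.continuous.continuousOn hR.differentiableOn
  obtain ⟨d, -, hRd⟩ := exists_deriv_eq_slope (deriv R) hac
    hR'.continuous.continuousOn hR'.differentiableOn
  have hsub : R (a + h) - R a = h * (c - a) * deriv (deriv R) d := by
    rw [hRd, hR'a, sub_zero, hRc, add_sub_cancel_left]
    field_simp [(sub_pos.mpr hac).ne']
  have hd : 0 ≤ deriv (deriv R) d := by
    have := isMinOn_univ_iff.mp hmin (a + h)
    rw [← sub_nonneg, hsub] at this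
    exact nonneg_of_mul_nonneg_right this (by nlinarith)
  rw [hsub]
  have := hK d
  have hca : c - a ≤ h := by linarith
  nlinarith [mul_le_mul_of_nonneg_left hca hh.le]

lemma exists_pos_mul_sq_lt_sin (K : ℝ) : ∃ ε > 0, K * ε ^ 2 < sin ε := by
  set L := |K| + 1
  have hL : 0 < L := by positivity
  refine ⟨1 / (2 * L), by positivity, ?_⟩
  set ε := 1 / (2 * L)
  have hε : 0 < ε := by positivity
  have hLε : L * ε = 1 / 2 := by simp only [ε]; field_simp
  have hε1 : ε ≤ 1 := by nlinarith [abs_nonneg K]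
  have hsin := sin_gt_sub_cube hε
  have hKL : K ≤ L := by linarith [le_abs_self K]
  nlinarith [mul_le_mul_of_nonneg_right hKL (sq_nonneg ε)]

/-- **Nonexistence of a bounded additive nonnegativity-preserving extension operator.**
For every `C > 0` there is a finite set `E ⊆ ℝ` such that no map `Ext` on nonnegative data
`f : E → [0, ∞)` can simultaneously be a `C`-bounded nonnegative `C²` extension operator
and be additive. -/
theorem no_additive_nonneg_C2_extension_operator :
    ∀ C : ℝ, 0 < C → ∃ E : Finset ℝ,
      ¬ ∃ Ext : (ℝ → ℝ) → ℝ → ℝ,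
        (∀ f : ℝ → ℝ, (∀ x ∈ E, 0 ≤ f x) →
          (∀ x ∈ E, Ext f x = f x) ∧ (∀ t : ℝ, 0 ≤ Ext f t) ∧
          ContDiff ℝ 2 (Ext f) ∧ C2NormLE (Ext f) (C * traceNormPlus E f)) ∧
        (∀ f g : ℝ → ℝ, (∀ x ∈ E, 0 ≤ f x) → (∀ x ∈ E, 0 ≤ g x) →
          Ext (f + g) = Ext f + Ext g) := by
  intro C hC
  obtain ⟨ε, hε, hsin⟩ := exists_pos_mul_sq_lt_sin (C * 4)
  have hsinε : 0 < sin ε := (by positivity : 0 ≤ C * 4 * ε ^ 2).trans_lt hsin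
  refine ⟨{0, ε}, ?_⟩
  rintro ⟨Ext, hA, hB⟩
  have hsin_nonneg : ∀ x ∈ ({0, ε} : Finset ℝ), 0 ≤ sin x := by simp [hsinε.le]
  let g (c : ℝ) : ℝ → ℝ := fun x => 1 + c * sin x
  have hm1 : |(-1 : ℝ)| ≤ 1 := by simp
  have hsplit : Ext (g 1) = Ext (g (-1)) + Ext sin + Ext sin := by
    have hg : g 1 = g (-1) + sin + sin := by funext x; simp only [g, Pi.add_apply]; ring
    rw [hg, hB (g (-1) + sin) sin
      (fun x hx => add_nonneg (one_add_mul_sin_nonneg hm1 x) (hsin_nonneg x hx)) hsin_nonneg,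
      hB (g (-1)) sin (fun x _ => one_add_mul_sin_nonneg hm1 x) hsin_nonneg]
  have hbound (c : ℝ) (hc : |c| ≤ 1) (x : ℝ) : |deriv (deriv (Ext (g c))) x| ≤ C * 4 := by
    have hnorm := (hA (g c) fun x _ => one_add_mul_sin_nonneg hc x).2.2.2
    exact (hnorm.mono (mul_le_mul_of_nonneg_left (traceNormPlus_one_add_mul_sin_le _ hc)
      hC.le)).abs_deriv_deriv_le x
  obtain ⟨hR_eq, hR_nonneg, hR, -⟩ := hA sin hsin_nonneg
  have hR0 : Ext sin 0 = 0 := by rw [hR_eq 0 (by simp), sin_zero]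
  have hR_min : IsMinOn (Ext sin) Set.univ 0 :=
    isMinOn_univ_iff.mpr fun x => hR0.trans_le (hR_nonneg x)
  have hR_le := hR_min.sub_le_mul_sq (hR.differentiable two_ne_zero)
    hR.differentiable_deriv_two (deriv_deriv_le_of_eq_add_add
      (hA _ fun x _ => one_add_mul_sin_nonneg hm1 x).2.2.1 hR hsplit (hbound 1 (by simp))
      (hbound (-1) hm1)) hε
  rw [zero_add, hR0, sub_zero, hR_eq ε (by simp)] at hR_le
  linarith

end
end
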